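/- arXiv:2504.10182 — 2 statements merged into one kernel-verified Lean document; each statement's English description precedes it below -/
import Mathlib

section
/- Let Λ be a skew-symmetric bilinear form on ℤ^m, B̃ = (b_{ij}) an m×n integer matrix with columns b_1,…,b_n, and suppose (Λ, B̃) is compatible: Λ(b_j, e_i) = δ_{ij} d_j with d_j positive integers. Fix 1 ≤ k ≤ n, let E = (e_{ij}) be the m×m matrix with e_{ij} = δ_{ij} for j ≠ k, e_{kk} = -1, and e_{ik} = max(-b_{ik}, 0) for i ≠ k, and set Λ' = E^T Λ E (as a bilinear form, Λ'(c,d) = Λ(Ec, Ed)) and B̃' = μ_k(B̃) (the Fomin–Zelevinsky mutation in direction k). Then the pair (Λ', B̃') is again compatible, with the same positive integers d_1, …, d_n: Λ'(b'_j, e_i) = δ_{ij} d_j for all i, j. -/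
/-- Fomin–Zelevinsky matrix mutation in direction `k` of an `m × n` extended
exchange matrix (`n ≤ m`). -/
def matMut {m n : ℕ} (hnm : n ≤ m) (B : Matrix (Fin m) (Fin n) ℤ) (k : Fin n) :
    Matrix (Fin m) (Fin n) ℤ :=
  fun i j =>
    if (i : ℕ) = (k : ℕ) ∨ j = k then -B i j
    else B i j + (|B i k| * B (Fin.castLE hnm k) j + B i k * |B (Fin.castLE hnm k) j|) / 2

/-- The `m × m` matrix `E` of quantum seed mutation in direction `k`:
`eᵢⱼ = δᵢⱼ` if `j ≠ k`; `eₖₖ = -1`; `eᵢₖ = [-bᵢₖ]₊` for `i ≠ k`. -/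
def mutE {m n : ℕ} (B : Matrix (Fin m) (Fin n) ℤ) (k : Fin n) :
    Matrix (Fin m) (Fin m) ℤ :=
  fun i j =>
    if (j : ℕ) ≠ (k : ℕ) then (if i = j then 1 else 0)
    else if (i : ℕ) = (k : ℕ) then -1
    else max (-(B i k)) 0

lemma mutE_mulVec {m n : ℕ} (hnm : n ≤ m) (B : Matrix (Fin m) (Fin n) ℤ) (k : Fin n)
    (v : Fin m → ℤ) (r : Fin m) :
    (mutE B k).mulVec v r =
      (if r = Fin.castLE hnm k then 0 else v r) +
      (if r = Fin.castLE hnm k then -1 else max (-(B r k)) 0) * v (Fin.castLE hnm k) := by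
  have hrk : ((r:ℕ) = (k:ℕ)) = (r = Fin.castLE hnm k) := by simp [Fin.ext_iff]
  show ∑ s, mutE B k r s * v s = _
  have step : ∀ s : Fin m, mutE B k r s * v s =
      (if s = Fin.castLE hnm k then
        (if r = Fin.castLE hnm k then -1 else max (-(B r k)) 0) * v s else 0)
      + (if s = Fin.castLE hnm k then 0 else (if s = r then v s else 0)) := by
    intro s
    by_cases hs : s = Fin.castLE hnm k
    · rw [if_pos hs, if_pos hs, add_zero, hs]
      have h1 : ¬ ((Fin.castLE hnm k : Fin m) : ℕ) ≠ (k:ℕ) := by simp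
      rw [mutE]
      show (if ((Fin.castLE hnm k : Fin m) : ℕ) ≠ (k:ℕ) then _ else _) * _ = _
      rw [if_neg h1]
      by_cases hr : r = Fin.castLE hnm k
      · rw [if_pos hr, if_pos (show (r:ℕ) = (k:ℕ) by simp [hr])]
      · rw [if_neg hr, if_neg (show ¬(r:ℕ) = (k:ℕ) by simpa [Fin.ext_iff] using hr)]
    · rw [if_neg hs, if_neg hs, zero_add]
      have hs' : (s:ℕ) ≠ (k:ℕ) := by simpa [Fin.ext_iff] using hs
      rw [mutE]
      show (if (s:ℕ) ≠ (k:ℕ) then _ else _) * _ = _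
      rw [if_pos hs']
      by_cases h : r = s
      · rw [if_pos h, if_pos h.symm, one_mul]
      · rw [if_neg h, if_neg (fun h' => h h'.symm), zero_mul]
  rw [Finset.sum_congr rfl (fun s _ => step s), Finset.sum_add_distrib, add_comm]
  congr 1
  · by_cases hr : r = Fin.castLE hnm k
    · rw [if_pos hr]
      refine Finset.sum_eq_zero fun s _ => ?_
      by_cases hs : s = Fin.castLE hnm k
      · rw [if_pos hs]
      · rw [if_neg hs, if_neg (fun h : s = r => hs (h.trans hr))]
    · rw [if_neg hr]
      have h2 : ∀ s : Fin m, (if s = Fin.castLE hnm k then 0 else (if s = r then v s else 0))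
          = (if s = r then v s else 0) := by
        intro s
        by_cases hs : s = Fin.castLE hnm k
        · rw [if_pos hs, if_neg (fun h : s = r => hr (h ▸ hs))]
        · rw [if_neg hs]
      rw [Finset.sum_congr rfl fun s _ => h2 s]
      simp [Finset.sum_ite_eq']
  · simp [Finset.sum_ite_eq']

lemma mutE_single {m n : ℕ} (hnm : n ≤ m) (B : Matrix (Fin m) (Fin n) ℤ) (k : Fin n)
    (i : Fin m) (hi : i ≠ Fin.castLE hnm k) :
    (mutE B k).mulVec (Pi.single i 1) = Pi.single i 1 := by
  funext r
  rw [mutE_mulVec hnm]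
  have h1 : (Pi.single i 1 : Fin m → ℤ) (Fin.castLE hnm k) = 0 := by
    rw [Pi.single_eq_of_ne (Ne.symm hi)]
  by_cases hr : r = Fin.castLE hnm k
  · rw [if_pos hr, if_pos hr, h1, mul_zero, add_zero, hr, h1]
  · rw [if_neg hr, if_neg hr, h1, mul_zero, add_zero]

lemma mutE_single_k {m n : ℕ} (hnm : n ≤ m) (B : Matrix (Fin m) (Fin n) ℤ) (k : Fin n) :
    (mutE B k).mulVec (Pi.single (Fin.castLE hnm k) 1) =
      fun r => if r = Fin.castLE hnm k then -1 else max (-(B r k)) 0 := by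
  funext r
  rw [mutE_mulVec hnm]
  rw [Pi.single_eq_same]
  by_cases hr : r = Fin.castLE hnm k
  · rw [if_pos hr, if_pos hr]; norm_num
  · rw [if_neg hr, if_neg hr, mul_one, Pi.single_eq_of_ne hr, zero_add]

lemma mutE_col_k {m n : ℕ} (hnm : n ≤ m) (B : Matrix (Fin m) (Fin n) ℤ) (k : Fin n)
    (hBkk : B (Fin.castLE hnm k) k = 0) :
    (mutE B k).mulVec (fun r => matMut hnm B k r k) = -(fun r => B r k) := by
  funext r
  rw [mutE_mulVec hnm]
  have hBk : matMut hnm B k (Fin.castLE hnm k) k = 0 := by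
    simp [matMut, hBkk]
  rw [hBk, mul_zero, add_zero, Pi.neg_apply]
  by_cases hr : r = Fin.castLE hnm k
  · rw [if_pos hr, hr, hBkk, neg_zero]
  · rw [if_neg hr]
    have : ((r:ℕ) = (k:ℕ) ∨ k = k) := Or.inr rfl
    rw [matMut, if_pos this]

lemma mutE_col {m n : ℕ} (hnm : n ≤ m) (B : Matrix (Fin m) (Fin n) ℤ) (k : Fin n)
    (hBkk : B (Fin.castLE hnm k) k = 0) (j : Fin n) (hj : j ≠ k) :
    (mutE B k).mulVec (fun r => matMut hnm B k r j) =
      (fun r => B r j) + (max (B (Fin.castLE hnm k) j) 0) • (fun r => B r k) := by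
  funext r
  rw [mutE_mulVec hnm]
  have hBkj : matMut hnm B k (Fin.castLE hnm k) j = -(B (Fin.castLE hnm k) j) := by
    simp [matMut]
  rw [hBkj]
  simp only [Pi.add_apply, Pi.smul_apply, smul_eq_mul]
  by_cases hr : r = Fin.castLE hnm k
  · rw [if_pos hr, if_pos hr, hr, hBkk, mul_zero, add_zero, zero_add]; ring
  · have hr' : (r:ℕ) ≠ (k:ℕ) := by simpa [Fin.ext_iff] using hr
    rw [if_neg hr, if_neg hr]
    rw [matMut, if_neg (by push_neg; exact ⟨hr', hj⟩)]
    set x := B r k with hx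
    set β := B (Fin.castLE hnm k) j with hβ
    rcases le_total 0 x with hx0 | hx0 <;> rcases le_total 0 β with hβ0 | hβ0
    · rw [abs_of_nonneg hx0, abs_of_nonneg hβ0, max_eq_right (neg_nonpos.mpr hx0),
        max_eq_left hβ0, ← two_mul, Int.mul_ediv_cancel_left _ two_ne_zero]
      ring
    · have h1 : x * β + x * -β = 0 := by ring
      rw [abs_of_nonneg hx0, abs_of_nonpos hβ0, h1, max_eq_right (neg_nonpos.mpr hx0),
        max_eq_right hβ0]
      simp
    · have h1 : -x * β + x * β = 0 := by ring
      rw [abs_of_nonpos hx0, abs_of_nonneg hβ0, h1, max_eq_left (neg_nonneg.mpr hx0),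
        max_eq_left hβ0]
      ring_nf
    · have h1 : -x * β + x * -β = 2 * (-(x * β)) := by ring
      rw [abs_of_nonpos hx0, abs_of_nonpos hβ0, h1, Int.mul_ediv_cancel_left _ two_ne_zero,
        max_eq_left (neg_nonneg.mpr hx0), max_eq_right hβ0]
      ring

/-- quantum seed mutation preserves compatibility.  If
`(Λ, B̃)` is compatible with positive integers `d₁,…,dₙ`, and
`Λ'(c,d) = Λ(Ec, Ed)`, `B̃' = μₖ(B̃)`, then `(Λ', B̃')` is compatible with the
same integers: `Λ'(b'ⱼ, eᵢ) = δᵢⱼ dⱼ` for all `i, j`. -/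
theorem mutation_preserves_compatibility {m n : ℕ} (hnm : n ≤ m)
    (Λ : (Fin m → ℤ) → (Fin m → ℤ) → ℤ)
    (hΛadd₁ : ∀ c c' d, Λ (c + c') d = Λ c d + Λ c' d)
    (hΛadd₂ : ∀ c d d', Λ c (d + d') = Λ c d + Λ c d')
    (hΛskew : ∀ c d, Λ c d = - Λ d c)
    (B : Matrix (Fin m) (Fin n) ℤ) (d : Fin n → ℤ) (hd : ∀ j, 0 < d j)
    (hcompat : ∀ (i : Fin m) (j : Fin n),
      Λ (fun r => B r j) (Pi.single i 1) = if (i : ℕ) = (j : ℕ) then d j else 0)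
    (k : Fin n) :
    ∀ (i : Fin m) (j : Fin n),
      Λ ((mutE B k).mulVec (fun r => matMut hnm B k r j))
        ((mutE B k).mulVec (Pi.single i 1))
        = if (i : ℕ) = (j : ℕ) then d j else 0 := by
  -- basic linearity
  have h0l : ∀ w, Λ 0 w = 0 := by
    intro w
    have h := hΛadd₁ 0 0 w
    simp only [add_zero] at h
    linarith
  have hneg_l : ∀ c w, Λ (-c) w = -Λ c w := by
    intro c w
    have h := hΛadd₁ c (-c) w
    simp only [add_neg_cancel, h0l] at h
    linarith
  have hsmul_l : ∀ (z : ℤ) (c w : Fin m → ℤ), Λ (z • c) w = z * Λ c w := by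
    intro z c w
    have := map_zsmul (AddMonoidHom.mk' (fun c => Λ c w) (fun a b => hΛadd₁ a b w)) z c
    simpa [smul_eq_mul] using this
  have hsmul_r : ∀ (z : ℤ) (c w : Fin m → ℤ), Λ c (z • w) = z * Λ c w := by
    intro z c w
    rw [hΛskew, hsmul_l, hΛskew c w]; ring
  have hexp : ∀ (v w g : Fin m → ℤ),
      (∀ r, Λ v (Pi.single r 1) = g r) → Λ v w = ∑ r, w r * g r := by
    intro v w g hg
    have hF := map_sum (AddMonoidHom.mk' (fun x => Λ v x) (fun a b => hΛadd₂ v a b))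
        (fun r => Pi.single r (w r)) Finset.univ
    calc Λ v w = Λ v (∑ r, Pi.single r (w r)) := by rw [Finset.univ_sum_single]
      _ = ∑ r, Λ v (Pi.single r (w r)) := hF
      _ = ∑ r, w r * g r := by
          refine Finset.sum_congr rfl fun r _ => ?_
          have h1 : Pi.single r (w r) = (w r) • (Pi.single r (1:ℤ) : Fin m → ℤ) := by
            funext s; simp [Pi.single_apply, mul_ite]
          rw [h1, hsmul_r, hg r]
  -- compatibility restated
  have hcompat' : ∀ (i : Fin m) (j : Fin n),
      Λ (fun r => B r j) (Pi.single i 1) = if i = Fin.castLE hnm j then d j else 0 := by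
    intro i j
    rw [hcompat]
    congr 1
    simp [Fin.ext_iff]
  -- skew relation on B
  have skewB : ∀ j l : Fin n,
      B (Fin.castLE hnm j) l * d j = -(B (Fin.castLE hnm l) j * d l) := by
    intro j l
    have h1 : Λ (fun r => B r j) (fun r => B r l) = B (Fin.castLE hnm j) l * d j := by
      rw [hexp _ _ _ (fun r => hcompat' r j)]
      simp [mul_ite, Finset.sum_ite_eq']
    have h2 : Λ (fun r => B r l) (fun r => B r j) = B (Fin.castLE hnm l) j * d l := by
      rw [hexp _ _ _ (fun r => hcompat' r l)]
      simp [mul_ite, Finset.sum_ite_eq']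
    rw [← h1, ← h2, ← hΛskew]
  have Bkk : B (Fin.castLE hnm k) k = 0 := by
    have h := skewB k k
    have hdk := (hd k).ne'
    have h2 : B (Fin.castLE hnm k) k * d k = 0 := by linarith
    rcases mul_eq_zero.mp h2 with h3 | h3
    · exact h3
    · exact absurd h3 hdk
  -- main computation
  intro i j
  by_cases hj : j = k
  · subst hj
    rw [mutE_col_k hnm B j Bkk]
    by_cases hi : i = Fin.castLE hnm j
    · subst hi
      rw [mutE_single_k hnm,
        hexp _ _ (fun r => -(if r = Fin.castLE hnm j then d j else 0))
          (fun r => by rw [hneg_l, hcompat'])]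
      have hc : ∀ r : Fin m,
          (if r = Fin.castLE hnm j then (-1:ℤ) else max (-(B r j)) 0) *
            (-(if r = Fin.castLE hnm j then d j else 0))
            = if r = Fin.castLE hnm j then d j else 0 := by
        intro r
        by_cases hr : r = Fin.castLE hnm j <;> simp [hr]
      rw [Finset.sum_congr rfl fun r _ => hc r]
      simp [Finset.sum_ite_eq']
    · rw [mutE_single hnm B j i hi, hneg_l, hcompat', if_neg hi, neg_zero,
        if_neg (by simpa [Fin.ext_iff] using hi)]
  · rw [mutE_col hnm B k Bkk j hj]
    have hΛv : ∀ r : Fin m,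
        Λ ((fun r => B r j) + (max (B (Fin.castLE hnm k) j) 0) • (fun r => B r k))
            (Pi.single r 1)
          = (if r = Fin.castLE hnm j then d j else 0)
            + max (B (Fin.castLE hnm k) j) 0 * (if r = Fin.castLE hnm k then d k else 0) := by
      intro r
      rw [hΛadd₁, hsmul_l, hcompat', hcompat']
    by_cases hi : i = Fin.castLE hnm k
    · subst hi
      rw [mutE_single_k hnm, hexp _ _ _ hΛv]
      have hjk : Fin.castLE hnm j ≠ Fin.castLE hnm k := by
        simp only [ne_eq, Fin.ext_iff, Fin.coe_castLE]
        exact fun h => hj (Fin.ext h)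
      have hc : ∀ r : Fin m,
          (if r = Fin.castLE hnm k then (-1:ℤ) else max (-(B r k)) 0) *
            ((if r = Fin.castLE hnm j then d j else 0)
              + max (B (Fin.castLE hnm k) j) 0 * (if r = Fin.castLE hnm k then d k else 0))
          = (if r = Fin.castLE hnm j then max (-(B (Fin.castLE hnm j) k)) 0 * d j else 0)
            + (if r = Fin.castLE hnm k then -(max (B (Fin.castLE hnm k) j) 0 * d k) else 0) := by
        intro r
        by_cases hr : r = Fin.castLE hnm k
        · rw [if_pos hr, if_pos hr, if_pos hr, if_neg (fun h : r = Fin.castLE hnm j =>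
            hjk (h ▸ hr)), if_neg (fun h : r = Fin.castLE hnm j => hjk (h ▸ hr))]
          ring
        · rw [if_neg hr, if_neg hr, if_neg hr, mul_zero, add_zero]
          by_cases hrj : r = Fin.castLE hnm j
          · rw [if_pos hrj, if_pos hrj, hrj, add_zero]
          · rw [if_neg hrj, if_neg hrj, mul_zero, add_zero]
      rw [Finset.sum_congr rfl fun r _ => hc r, Finset.sum_add_distrib,
        Finset.sum_ite_eq' Finset.univ (Fin.castLE hnm j)
          (fun _ => max (-(B (Fin.castLE hnm j) k)) 0 * d j),
        Finset.sum_ite_eq' Finset.univ (Fin.castLE hnm k)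
          (fun _ => -(max (B (Fin.castLE hnm k) j) 0 * d k))]
      simp only [Finset.mem_univ, if_pos]
      have key : max (-(B (Fin.castLE hnm j) k)) 0 * d j
          = max (B (Fin.castLE hnm k) j) 0 * d k := by
        have h := skewB j k
        calc max (-(B (Fin.castLE hnm j) k)) 0 * d j
            = max (-(B (Fin.castLE hnm j) k) * d j) (0 * d j) :=
              max_mul_of_nonneg _ _ (hd j).le
          _ = max (B (Fin.castLE hnm k) j * d k) 0 := by rw [zero_mul, neg_mul, h, neg_neg]
          _ = max (B (Fin.castLE hnm k) j) 0 * d k := by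
              rw [max_mul_of_nonneg _ _ (hd k).le, zero_mul]
      rw [key, if_neg (show ¬((Fin.castLE hnm k : Fin m) : ℕ) = (j:ℕ) by
        simp only [Fin.coe_castLE]; exact fun h => hj (Fin.ext h.symm))]
      ring
    · rw [mutE_single hnm B k i hi, hΛv, if_neg hi, mul_zero, add_zero]
      congr 1
      simp [Fin.ext_iff]
end

section
/- Let R be a commutative ring and u ∈ R. Define u_0 = 1, u_1 = u, u_2 = u^2 - 2, u_{n+1} = u_1 u_n - u_{n-1} for n ≥ 2. Suppose (x_m)_{m∈ℤ} is a family of elements of R satisfying both: (a) u · x_m = x_{m-2} + x_{m+2} for all m ∈ ℤ, and (b) x_m x_{m+3} = x_{m+1} x_{m+2} + 1 for all m ∈ ℤ. Then for all m ∈ ℤ and all n ≥ 0: x_m x_{m+2n+3} = x_{m+n+1} x_{m+n+2} + Σ_{l=0}^{⌊n/2⌋} (l+1) u_{n-2l} + Σ_{l=0}^{⌊(n-1)/2⌋} (l+1) u_{n-1-2l} (the second sum being empty for n = 0). -/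
/-!
Let `Sₖ` be the Chebyshev polynomials `S₀ = 1`, `S₁ = X`, `Sₖ₊₂ = X Sₖ₊₁ - Sₖ`. For `k ≥ 1` the
Chebyshev-like element is `u_k = Cₖ(u) = Sₖ(u) - Sₖ₋₂(u)`, so `∑_l u_{k-2l}` telescopes to `Sₖ(u)`, and
the two weighted sums of the statement add up to `∑_{k ≤ n} Sₖ(u)`. This sum and the defect
`x_m x_{m+2n+3} - x_{m+n+1} x_{m+n+2}` both satisfy `D_{n+2} = u D_{n+1} - D_n + 1` (for the defect
this is (a) and (b)), and both take the values `1` and `u + 1` at `n = 0, 1`, so they agree.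
-/

/-- The normalized Chebyshev-like sequence associated with elements `u, t`:
`u₀ = 1`, `u₁ = u`, `u₂ = u² - 2t`, `u_{n+1} = u₁ uₙ - t u_{n-1}` for `n ≥ 2`. -/
def cheb {A : Type*} [Ring A] (u t : A) : ℕ → A
  | 0 => 1
  | 1 => u
  | 2 => u ^ 2 - 2 * t
  | n + 3 => u * cheb u t (n + 2) - t * cheb u t (n + 1)

open Finset Polynomial Polynomial.Chebyshev

theorem sum_range_div_two_add_two {M : Type*} [AddCommMonoid M] (g : ℕ → ℕ → M) (n : ℕ) :
    ∑ l ∈ range ((n + 2) / 2 + 1), g l (n + 2 - 2 * l)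
      = g 0 (n + 2) + ∑ l ∈ range (n / 2 + 1), g (l + 1) (n - 2 * l) := by
  rw [show (n + 2) / 2 + 1 = n / 2 + 1 + 1 by omega, sum_range_succ', add_comm]
  congr 1
  exact sum_congr rfl fun l _ => by rw [show n + 2 - 2 * (l + 1) = n - 2 * l by omega]

section WeightedSums

variable {R : Type*} [Semiring R] (f : ℕ → R)

theorem sum_range_div_two_weighted_add_two (n : ℕ) :
    ∑ l ∈ range ((n + 2) / 2 + 1), ((l : R) + 1) * f (n + 2 - 2 * l)
      = ∑ l ∈ range ((n + 2) / 2 + 1), f (n + 2 - 2 * l)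
        + ∑ l ∈ range (n / 2 + 1), ((l : R) + 1) * f (n - 2 * l) := by
  rw [sum_range_div_two_add_two (fun l k => ((l : R) + 1) * f k),
    sum_range_div_two_add_two (fun _ k => f k)]
  simp only [Nat.cast_zero, zero_add, one_mul, Nat.cast_succ, add_mul, sum_add_distrib]
  abel

theorem sum_range_div_two_weighted_succ_add (n : ℕ) :
    ∑ l ∈ range ((n + 1) / 2 + 1), ((l : R) + 1) * f (n + 1 - 2 * l)
      + ∑ l ∈ range (n / 2 + 1), ((l : R) + 1) * f (n - 2 * l)
      = ∑ k ∈ range (n + 2), ∑ l ∈ range (k / 2 + 1), f (k - 2 * l) := by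
  induction n with
  | zero => simp [sum_range_succ, add_comm]
  | succ n ih =>
    rw [sum_range_div_two_weighted_add_two, sum_range_succ _ (n + 2), ← ih]
    abel

theorem sum_range_div_two_weighted_add_pred (n : ℕ) :
    ∑ l ∈ range (n / 2 + 1), ((l : R) + 1) * f (n - 2 * l)
      + ∑ l ∈ range ((n + 1) / 2), ((l : R) + 1) * f (n - 1 - 2 * l)
      = ∑ k ∈ range (n + 1), ∑ l ∈ range (k / 2 + 1), f (k - 2 * l) := by
  cases n with
  | zero => simp
  | succ n =>
    rw [← sum_range_div_two_weighted_succ_add, show (n + 1 + 1) / 2 = n / 2 + 1 by omega]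
    simp only [Nat.add_sub_cancel]

end WeightedSums

section Chebyshev

variable {R : Type*} [CommRing R]

theorem Polynomial.Chebyshev.C_add_two_eq_S_sub_S (n : ℤ) : C R (n + 2) = S R (n + 2) - S R n := by
  have h := C_eq_S_sub_X_mul_S R (n + 2)
  rw [show n + 2 - 1 = n + 1 by ring] at h
  linear_combination h + S_add_two R n

theorem cheb_one_succ_eq_eval_C (u : R) (n : ℕ) : cheb u 1 (n + 1) = (C R (n + 1)).eval u := by
  induction n using Nat.twoStepInduction with
  | zero => simp [cheb]
  | one => simp [cheb, C_two]
  | more n ih₀ ih₁ =>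
    rw [show ((n + 2 : ℕ) : ℤ) + 1 = (n + 1 : ℤ) + 2 by push_cast; ring, C_add_two, cheb]
    push_cast at ih₀ ih₁
    simp [ih₀, ih₁]

theorem sum_cheb_one_eq_eval_S (u : R) (n : ℕ) :
    ∑ l ∈ range (n / 2 + 1), cheb u 1 (n - 2 * l) = (S R n).eval u := by
  induction n using Nat.twoStepInduction with
  | zero => simp [cheb]
  | one => simp [cheb]
  | more n ih _ =>
    rw [sum_range_div_two_add_two (fun _ k => cheb u 1 k), ih, cheb_one_succ_eq_eval_C]
    push_cast
    rw [add_assoc, one_add_one_eq_two, C_add_two_eq_S_sub_S]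
    simp

theorem Polynomial.Chebyshev.sum_range_S_add_three (n : ℕ) :
    ∑ k ∈ range (n + 3), S R k = X * ∑ k ∈ range (n + 2), S R k - ∑ k ∈ range (n + 1), S R k + 1 := by
  induction n with
  | zero => simp [sum_range_succ, S_two]; ring
  | succ n ih =>
    have h₃ := sum_range_succ (fun k : ℕ => S R k) (n + 3)
    have h₂ := sum_range_succ (fun k : ℕ => S R k) (n + 2)
    have h₁ := sum_range_succ (fun k : ℕ => S R k) (n + 1)
    push_cast at h₁ h₂ h₃ ⊢
    linear_combination (norm := ring_nf) h₃ + ih - X * h₂ + h₁ + S_add_two R ((n : ℤ) + 1)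

end Chebyshev

theorem eq_of_add_two_eq_mul_sub_add {R : Type*} [Ring R] {f g : ℕ → R} (a c : R)
    (hf : ∀ n, f (n + 2) = a * f (n + 1) - f n + c) (hg : ∀ n, g (n + 2) = a * g (n + 1) - g n + c)
    (h₀ : f 0 = g 0) (h₁ : f 1 = g 1) (n : ℕ) : f n = g n := by
  induction n using Nat.twoStepInduction with
  | zero => exact h₀
  | one => exact h₁
  | more n ih₀ ih₁ => rw [hf, hg, ih₀, ih₁]

section Exchange

variable {R : Type*} [CommRing R] (x : ℤ → R)

def exchangeDefect (m n : ℤ) : R := x m * x (m + 2 * n + 3) - x (m + n + 1) * x (m + n + 2)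

theorem exchangeDefect_neg_one (m : ℤ) : exchangeDefect x m (-1) = 0 := by
  unfold exchangeDefect
  ring_nf

theorem exchangeDefect_zero (hb : ∀ m : ℤ, x m * x (m + 3) = x (m + 1) * x (m + 2) + 1) (m : ℤ) :
    exchangeDefect x m 0 = 1 := by
  unfold exchangeDefect
  linear_combination (norm := ring_nf) hb m

theorem exchangeDefect_add_two {u : R} (ha : ∀ m : ℤ, u * x m = x (m - 2) + x (m + 2))
    (hb : ∀ m : ℤ, x m * x (m + 3) = x (m + 1) * x (m + 2) + 1) (m n : ℤ) :
    exchangeDefect x m (n + 2) = u * exchangeDefect x m (n + 1) - exchangeDefect x m n + 1 := by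
  unfold exchangeDefect
  linear_combination (norm := ring_nf)
    -x m * ha (m + 2 * n + 5) + x (m + n + 3) * ha (m + n + 2) + hb (m + n)

end Exchange

/-- in a commutative ring, with the Chebyshev-like sequence with
parameter `t = 1`, if a family `(xₘ)_{m ∈ ℤ}` satisfies
(a) `u · xₘ = x_{m-2} + x_{m+2}` and (b) `xₘ x_{m+3} = x_{m+1} x_{m+2} + 1`
for all `m ∈ ℤ`, then for all `m ∈ ℤ` and `n ≥ 0`:
`xₘ x_{m+2n+3} = x_{m+n+1} x_{m+n+2} + ∑_{l=0}^{⌊n/2⌋} (l+1) u_{n-2l}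
  + ∑_{l=0}^{⌊(n-1)/2⌋} (l+1) u_{n-1-2l}`
(the second sum being empty when `n = 0`). -/
theorem cluster_multiplication_formula_q1 {R : Type*} [CommRing R] (u : R)
    (x : ℤ → R)
    (ha : ∀ m : ℤ, u * x m = x (m - 2) + x (m + 2))
    (hb : ∀ m : ℤ, x m * x (m + 3) = x (m + 1) * x (m + 2) + 1) :
    ∀ (m : ℤ) (n : ℕ),
      x m * x (m + 2 * (n : ℤ) + 3)
        = x (m + (n : ℤ) + 1) * x (m + (n : ℤ) + 2)
          + (∑ l ∈ Finset.range (n / 2 + 1), ((l : R) + 1) * cheb u 1 (n - 2 * l))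
          + ∑ l ∈ Finset.range ((n + 1) / 2), ((l : R) + 1) * cheb u 1 (n - 1 - 2 * l) := by
  intro m n
  have hdefect : exchangeDefect x m n = (∑ k ∈ range (n + 1), S R k).eval u := by
    refine eq_of_add_two_eq_mul_sub_add (f := fun k => exchangeDefect x m k)
      (g := fun k => (∑ j ∈ range (k + 1), S R j).eval u) u 1
      (fun k => ?_) (fun k => ?_) ?_ ?_ n
    · push_cast
      exact exchangeDefect_add_two x ha hb m k
    · simp [sum_range_S_add_three]
    · simp [exchangeDefect_zero x hb]
    · -- the defect vanishes at `n = -1`, so the recurrence there gives `u + 1` at `n = 1`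
      simpa [exchangeDefect_zero x hb, exchangeDefect_neg_one, sum_range_succ, add_comm] using
        exchangeDefect_add_two x ha hb m (-1)
  have hsum := sum_range_div_two_weighted_add_pred (cheb u 1) n
  simp only [sum_cheb_one_eq_eval_S, ← eval_finsetSum, ← hdefect, exchangeDefect] at hsum
  linear_combination -hsum
end
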